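/- Let M be a simple binary k-paving matroid of rank r with r ≥ k + 4 whose ground set is not a circuit of M, and suppose every circuit of M has size at least r - w + 1 for a non-negative integer w ≤ k with equality achieved by some circuit. Then |E(M)| ≤ (r + 1) + ∑_{i=0}^{s} C(w, i), where s = ⌊(3w + 1 - r)/2⌋. -/

import Mathlib

namespace Matroid

variable {α : Type*}

/-- A circuit of a matroid is a minimal dependent set. -/
def Circuit (M : Matroid α) (C : Set α) : Prop :=
  M.Dep C ∧ ∀ D, D ⊂ C → M.Indep D

/-- A coloop is an element belonging to every basis. -/
def Coloop (M : Matroid α) (e : α) : Prop :=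
  e ∈ M.E ∧ ∀ B, M.IsBase B → e ∈ B

/-- A matroid is simple if every subset of the ground set with at most two
elements is independent. -/
def Simple (M : Matroid α) : Prop :=
  ∀ e ∈ M.E, ∀ f ∈ M.E, M.Indep {e, f}

/-- The rank of a matroid: the supremum of the cardinalities of its bases. -/
noncomputable def rk (M : Matroid α) : ℕ :=
  sSup {n | ∃ B, M.IsBase B ∧ B.ncard = n}

/-- A matroid is representable over a field `F` if independence in `M` coincides
with linear independence under some assignment of vectors to ground set elements. -/
def RepresentableOver (M : Matroid α) (F : Type) [Field F] : Prop :=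
  ∃ (n : ℕ) (φ : α → (Fin n → F)),
    ∀ I, I ⊆ M.E → (M.Indep I ↔ LinearIndependent F (fun x : I => φ x))

/-- An element `e` is `k`-loose if every circuit containing `e` has size
greater than `r - k`, where `r` is the rank of the matroid. -/
def KLoose (M : Matroid α) (k : ℕ) (e : α) : Prop :=
  e ∈ M.E ∧ ∀ C, M.Circuit C → e ∈ C → M.rk - k < C.ncard

/-- A matroid is `k`-paving if every element is `k`-loose. -/
def KPaving (M : Matroid α) (k : ℕ) : Prop :=
  ∀ e ∈ M.E, M.KLoose k e

end Matroid

/-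
Fix a binary representation `φ`, a smallest circuit `C₀` (of size `g = r - w + 1`), some
`f₀ ∈ C₀` and a basis `B ⊇ C₀ - f₀`, so that `W = B \ C₀` has `w` elements. Nonempty zero-sum
sets are dependent, hence have at least `g` elements; so if a zero-sum set `A` has an element
outside `C₀`, the nonempty zero-sum set `A ∆ C₀` has at least `|C₀|` elements, i.e.
`2 |A ∩ C₀| ≤ |A|`. Applied to the fundamental circuit `e + S_e` of each `e ∉ B ∪ C₀` this
gives `g ≤ 2 |S_e \ C₀| + 2`; and two such elements with `S_e \ C₀ = S_e' \ C₀` would yield a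
zero-sum set `{e, e'} ∪ (S_e ∆ S_e')` of at most four elements. So `e ↦ W \ S_e` injects
`E \ (B ∪ C₀)` into the subsets of `W` of size at most `s`, and `E` is covered by `B`, `f₀` and
these elements.
-/

open Finset
open scoped symmDiff

theorem ZModModule.add_self_eq_zero {V : Type*} [AddCommGroup V] [Module (ZMod 2) V] (v : V) :
    v + v = 0 := by
  rw [← two_nsmul]
  exact ZModModule.char_nsmul_eq_zero 2 v

namespace Finset

variable {ι V : Type*} [DecidableEq ι]

theorem sum_symmDiff_of_zmodModule_two [AddCommGroup V] [Module (ZMod 2) V] (φ : ι → V)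
    (s t : Finset ι) : ∑ i ∈ s ∆ t, φ i = ∑ i ∈ s, φ i + ∑ i ∈ t, φ i := by
  rw [symmDiff_def, sup_eq_union, sum_union disjoint_sdiff_sdiff,
    ← sum_inter_add_sum_sdiff s t φ, ← sum_inter_add_sum_sdiff t s φ, inter_comm t s,
    add_add_add_comm, ZModModule.add_self_eq_zero, zero_add]

theorem card_symmDiff_add_two_mul_card_inter (s t : Finset ι) :
    #(s ∆ t) + 2 * #(s ∩ t) = #s + #t := by
  rw [symmDiff_def, sup_eq_union, card_union_of_disjoint disjoint_sdiff_sdiff,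
    ← card_sdiff_add_card_inter s t, ← card_sdiff_add_card_inter t s, inter_comm t s]
  ring

theorem card_le_sum_choose_of_forall_card_le {𝒜 : Finset (Finset ι)} {W : Finset ι} {s : ℤ}
    (h𝒜 : ∀ S ∈ 𝒜, S ⊆ W ∧ (#S : ℤ) ≤ s) :
    (#𝒜 : ℤ) ≤ ∑ i ∈ Icc 0 s, ((#W).choose i.toNat : ℤ) := by
  have h𝒜W : 𝒜 ⊆ (Icc 0 s).biUnion fun i => W.powersetCard i.toNat := by
    intro S hS
    obtain ⟨hSW, hSs⟩ := h𝒜 S hS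
    exact mem_biUnion.2 ⟨#S, mem_Icc.2 ⟨by positivity, hSs⟩, mem_powersetCard.2 ⟨hSW, by simp⟩⟩
  have := (card_le_card h𝒜W).trans card_biUnion_le
  simp only [card_powersetCard] at this
  exact_mod_cast this

end Finset

theorem linearIndepOn_finset_iff_zmod_two {ι V : Type*} [AddCommGroup V] [Module (ZMod 2) V]
    {φ : ι → V} {s : Finset ι} :
    LinearIndepOn (ZMod 2) φ s ↔ ∀ t ⊆ s, ∑ i ∈ t, φ i = 0 → t = ∅ := by
  classical
  rw [linearIndepOn_finset_iff]
  constructor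
  · intro h t hts ht
    by_contra hne
    obtain ⟨i, hi⟩ := nonempty_iff_ne_empty.2 hne
    have := h (fun j => if j ∈ t then 1 else 0)
      (by simpa [ite_smul, sum_ite_mem, inter_eq_right.2 hts] using ht) i (hts hi)
    simp [hi] at this
  · intro h f hf i hi
    have hf01 : ∀ j, f j ≠ 0 → f j = 1 := fun j => by generalize f j = a; revert a; decide
    have ht := h (s.filter (f · ≠ 0)) (filter_subset _ s) (by
      rw [← hf, sum_filter]
      refine sum_congr rfl fun j _ => ?_
      split_ifs with hj
      · rw [hf01 j hj, one_smul]
      · rw [not_not.1 hj, zero_smul])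
    by_contra hfi
    exact (filter_eq_empty_iff.1 ht) hi hfi

section ZeroSum

variable {α V : Type*} [DecidableEq α] [AddCommGroup V] [Module (ZMod 2) V] {φ : α → V}
  {E C₀ : Finset α} {g : ℕ}

theorem two_mul_card_inter_le_card_of_sum_eq_zero
    (hgirth : ∀ A ⊆ E, A.Nonempty → ∑ e ∈ A, φ e = 0 → g ≤ #A)
    (hC₀E : C₀ ⊆ E) (hC₀ : ∑ e ∈ C₀, φ e = 0) (hC₀g : #C₀ ≤ g)
    {A : Finset α} (hAE : A ⊆ E) (hA : ∑ e ∈ A, φ e = 0) {e : α} (heA : e ∈ A) (heC₀ : e ∉ C₀) :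
    2 * #(A ∩ C₀) ≤ #A := by
  have hsymm := hgirth (A ∆ C₀) (symmDiff_le_sup.trans (union_subset hAE hC₀E))
    ⟨e, mem_symmDiff.2 (Or.inl ⟨heA, heC₀⟩)⟩
    (by rw [sum_symmDiff_of_zmodModule_two, hA, hC₀, add_zero])
  have := card_symmDiff_add_two_mul_card_inter A C₀
  omega

theorem le_two_mul_card_sdiff_add_two
    (hgirth : ∀ A ⊆ E, A.Nonempty → ∑ e ∈ A, φ e = 0 → g ≤ #A)
    (hC₀E : C₀ ⊆ E) (hC₀ : ∑ e ∈ C₀, φ e = 0) (hC₀g : #C₀ ≤ g)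
    {S : Finset α} (hSE : S ⊆ E) {e : α} (heE : e ∈ E) (heS : e ∉ S) (heC₀ : e ∉ C₀)
    (hφe : φ e + ∑ b ∈ S, φ b = 0) :
    g ≤ 2 * #(S \ C₀) + 2 := by
  have hAE : insert e S ⊆ E := insert_subset heE hSE
  have hA : ∑ b ∈ insert e S, φ b = 0 := by rwa [sum_insert heS]
  have hgA := hgirth _ hAE (insert_nonempty e S) hA
  have hinter := two_mul_card_inter_le_card_of_sum_eq_zero hgirth hC₀E hC₀ hC₀g hAE hA
    (mem_insert_self e S) heC₀
  rw [insert_inter_of_notMem heC₀, card_insert_of_notMem heS] at hinter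
  rw [card_insert_of_notMem heS] at hgA
  have := card_inter_add_card_sdiff S C₀
  omega

-- The zero-sum set `{e₁, e₂} ∪ (S₁ ∆ S₂)` meets `C₀` in `S₁ ∆ S₂`, forcing it to be too small.
theorem eq_of_sdiff_eq_of_add_sum_eq_zero
    (hgirth : ∀ A ⊆ E, A.Nonempty → ∑ e ∈ A, φ e = 0 → g ≤ #A)
    (hC₀E : C₀ ⊆ E) (hC₀ : ∑ e ∈ C₀, φ e = 0) (hC₀g : #C₀ ≤ g) (hg : 5 ≤ g)
    {e₁ e₂ : α} {S₁ S₂ : Finset α} (he₁E : e₁ ∈ E) (he₂E : e₂ ∈ E)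
    (he₁C₀ : e₁ ∉ C₀) (he₂C₀ : e₂ ∉ C₀)
    (hφe₁ : φ e₁ + ∑ b ∈ S₁, φ b = 0) (hφe₂ : φ e₂ + ∑ b ∈ S₂, φ b = 0)
    (hS : S₁ \ C₀ = S₂ \ C₀) :
    e₁ = e₂ := by
  by_contra hne
  set G := S₁ ∆ S₂
  have hGC₀ : G ⊆ C₀ := by
    intro x hx
    by_contra hxC₀
    have hmem := congrArg (x ∈ ·) hS
    simp only [mem_sdiff, hxC₀, not_false_eq_true, and_true, eq_iff_iff] at hmem
    rcases mem_symmDiff.1 hx with h | h <;> tauto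
  have he₁G : e₁ ∉ insert e₂ G := by
    rw [mem_insert, not_or]
    exact ⟨hne, fun h => he₁C₀ (hGC₀ h)⟩
  have he₂G : e₂ ∉ G := fun h => he₂C₀ (hGC₀ h)
  have hAE : insert e₁ (insert e₂ G) ⊆ E :=
    insert_subset he₁E (insert_subset he₂E (hGC₀.trans hC₀E))
  have hA : ∑ b ∈ insert e₁ (insert e₂ G), φ b = 0 := by
    rw [sum_insert he₁G, sum_insert he₂G, sum_symmDiff_of_zmodModule_two]
    calc _ = (φ e₁ + ∑ b ∈ S₁, φ b) + (φ e₂ + ∑ b ∈ S₂, φ b) := by abel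
      _ = 0 := by rw [hφe₁, hφe₂, add_zero]
  have hgA := hgirth _ hAE (insert_nonempty _ _) hA
  have hinter := two_mul_card_inter_le_card_of_sum_eq_zero hgirth hC₀E hC₀ hC₀g hAE hA
    (mem_insert_self _ _) he₁C₀
  have hGinter : #G ≤ #(insert e₁ (insert e₂ G) ∩ C₀) :=
    card_le_card (subset_inter ((subset_insert _ _).trans (subset_insert _ _)) hGC₀)
  rw [card_insert_of_notMem he₁G, card_insert_of_notMem he₂G] at hgA hinter
  omega

-- Each `e ∉ B ∪ C₀` is sent to the part of `B \ C₀` missed by its fundamental circuit.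
theorem card_sdiff_union_le_card_filter_powerset
    (hgirth : ∀ A ⊆ E, A.Nonempty → ∑ e ∈ A, φ e = 0 → g ≤ #A)
    (hC₀E : C₀ ⊆ E) (hC₀ : ∑ e ∈ C₀, φ e = 0) (hC₀g : #C₀ ≤ g) (hg : 5 ≤ g)
    {B : Finset α} (hBE : B ⊆ E) (hfund : ∀ e ∈ E \ B, ∃ S ⊆ B, φ e + ∑ b ∈ S, φ b = 0) :
    #(E \ (B ∪ C₀)) ≤ #((B \ C₀).powerset.filter fun T => 2 * #T + g ≤ 2 * #(B \ C₀) + 2) := by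
  choose! F hFB hFφ using hfund
  set W := B \ C₀
  have hmem : ∀ {e}, e ∈ E \ (B ∪ C₀) → e ∈ E \ B ∧ e ∉ C₀ := by
    intro e he
    simp only [mem_sdiff, mem_union, not_or] at he ⊢
    exact ⟨⟨he.1, he.2.1⟩, he.2.2⟩
  have hWF : ∀ e ∈ E \ B, W ∩ F e = F e \ C₀ := by
    intro e he
    ext x
    have := @hFB e he x
    simp only [W, mem_inter, mem_sdiff]
    tauto
  refine card_le_card_of_injOn (fun e => W \ F e) (fun e he => ?_) (fun e₁ he₁ e₂ he₂ heq => ?_)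
  · obtain ⟨heB, heC₀⟩ := hmem he
    have hgF := le_two_mul_card_sdiff_add_two hgirth hC₀E hC₀ hC₀g ((hFB e heB).trans hBE)
      (mem_sdiff.1 heB).1 (fun h => (mem_sdiff.1 heB).2 (hFB e heB h)) heC₀ (hFφ e heB)
    have hcard := card_sdiff_add_card_inter W (F e)
    rw [hWF e heB] at hcard
    simp only [coe_filter, Set.mem_ofPred_eq, mem_powerset]
    exact ⟨sdiff_subset, by omega⟩
  · obtain ⟨he₁B, he₁C₀⟩ := hmem he₁
    obtain ⟨he₂B, he₂C₀⟩ := hmem he₂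
    have hS : F e₁ \ C₀ = F e₂ \ C₀ := by
      rw [← hWF e₁ he₁B, ← hWF e₂ he₂B, ← sdiff_sdiff_self_left, ← sdiff_sdiff_self_left]
      exact congrArg (W \ ·) heq
    exact eq_of_sdiff_eq_of_add_sum_eq_zero hgirth hC₀E hC₀ hC₀g hg (mem_sdiff.1 he₁B).1
      (mem_sdiff.1 he₂B).1 he₁C₀ he₂C₀ (hFφ e₁ he₁B) (hFφ e₂ he₂B) hS

end ZeroSum

namespace Matroid

variable {α V : Type*} [AddCommGroup V] [Module (ZMod 2) V] {M : Matroid α} {φ : α → V}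

theorem circuit_iff_isCircuit {C : Set α} : M.Circuit C ↔ M.IsCircuit C :=
  isCircuit_iff_forall_ssubset.symm

theorem rk_eq_ncard_of_isBase {B : Set α} (hB : M.IsBase B) : M.rk = B.ncard := by
  have hranks : {n | ∃ B', M.IsBase B' ∧ B'.ncard = n} = {B.ncard} := by
    ext n
    simp only [Set.mem_ofPred_eq, Set.mem_singleton_iff]
    constructor
    · rintro ⟨B', hB', rfl⟩
      exact hB'.ncard_eq_ncard_of_isBase hB
    · rintro rfl
      exact ⟨B, hB, rfl⟩
  rw [rk, hranks, csSup_singleton]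

theorem IsCircuit.exists_isBase_inter_eq_diff_singleton {C : Set α} {f : α}
    (hC : M.IsCircuit C) (hf : f ∈ C) : ∃ B, M.IsBase B ∧ B ∩ C = C \ {f} := by
  obtain ⟨B, hB, hCB⟩ := (hC.sdiff_singleton_indep hf).exists_isBase_superset
  have hfB : f ∉ B := fun hfB =>
    hC.not_indep (hB.indep.subset
      (by simpa [Set.insert_eq_of_mem hf] using Set.insert_subset hfB hCB))
  refine ⟨B, hB, subset_antisymm (fun x hx => ⟨hx.2, ?_⟩) (Set.subset_inter hCB Set.sdiff_subset)⟩
  rintro rfl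
  exact hfB hx.1

theorem indep_coe_iff_of_zmod_two (hφ : ∀ I ⊆ M.E, M.Indep I ↔ LinearIndepOn (ZMod 2) φ I)
    {A : Finset α} (hAE : ↑A ⊆ M.E) : M.Indep ↑A ↔ ∀ S ⊆ A, ∑ e ∈ S, φ e = 0 → S = ∅ :=
  (hφ _ hAE).trans linearIndepOn_finset_iff_zmod_two

theorem dep_of_sum_eq_zero (hφ : ∀ I ⊆ M.E, M.Indep I ↔ LinearIndepOn (ZMod 2) φ I)
    {A : Finset α} (hAE : ↑A ⊆ M.E) (hA : A.Nonempty) (hsum : ∑ e ∈ A, φ e = 0) : M.Dep ↑A :=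
  ⟨fun hind => hA.ne_empty ((indep_coe_iff_of_zmod_two hφ hAE).1 hind A subset_rfl hsum), hAE⟩

theorem le_card_of_sum_eq_zero (hφ : ∀ I ⊆ M.E, M.Indep I ↔ LinearIndepOn (ZMod 2) φ I)
    {g : ℕ} (hg : ∀ C, M.IsCircuit C → g ≤ C.ncard)
    {A : Finset α} (hAE : ↑A ⊆ M.E) (hA : A.Nonempty) (hsum : ∑ e ∈ A, φ e = 0) : g ≤ #A := by
  obtain ⟨C, hCA, hC⟩ := (dep_of_sum_eq_zero hφ hAE hA hsum).exists_isCircuit_subset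
  calc g ≤ C.ncard := hg C hC
    _ ≤ (↑A : Set α).ncard := Set.ncard_le_ncard hCA A.finite_toSet
    _ = #A := Set.ncard_coe_finset A

theorem sum_eq_zero_of_isCircuit (hφ : ∀ I ⊆ M.E, M.Indep I ↔ LinearIndepOn (ZMod 2) φ I)
    {C : Finset α} (hC : M.IsCircuit ↑C) : ∑ e ∈ C, φ e = 0 := by
  have hCE := hC.subset_ground
  obtain ⟨S, hSC, hS, hSne⟩ : ∃ S ⊆ C, ∑ e ∈ S, φ e = 0 ∧ S ≠ ∅ := by
    simpa using (indep_coe_iff_of_zmod_two hφ hCE).not.1 hC.not_indep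
  have hSdep := dep_of_sum_eq_zero hφ ((coe_subset.2 hSC).trans hCE)
    (nonempty_iff_ne_empty.2 hSne) hS
  rwa [← coe_inj.1 (hC.eq_of_dep_subset hSdep (coe_subset.2 hSC))]

theorem exists_add_sum_eq_zero_of_isBase
    (hφ : ∀ I ⊆ M.E, M.Indep I ↔ LinearIndepOn (ZMod 2) φ I)
    {B : Finset α} (hB : M.IsBase ↑B) {e : α} (he : e ∈ M.E) (heB : e ∉ B) :
    ∃ S ⊆ B, φ e + ∑ b ∈ S, φ b = 0 := by
  classical
  have hBE := hB.subset_ground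
  have hdep := hB.insert_dep ⟨he, heB⟩
  rw [← coe_insert] at hdep
  obtain ⟨S, hSB, hS, hSne⟩ : ∃ S ⊆ insert e B, ∑ e ∈ S, φ e = 0 ∧ S ≠ ∅ := by
    simpa using (indep_coe_iff_of_zmod_two hφ hdep.subset_ground).not.1 hdep.not_indep
  have heS : e ∈ S := by
    by_contra heS
    exact hSne ((indep_coe_iff_of_zmod_two hφ hBE).1 hB.indep S
      (fun x hx => (mem_insert.1 (hSB hx)).resolve_left (by rintro rfl; exact heS hx)) hS)
  refine ⟨S.erase e, fun x hx => (mem_insert.1 (hSB (mem_of_mem_erase hx))).resolve_left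
    (ne_of_mem_erase hx), ?_⟩
  rwa [add_sum_erase S φ heS]

theorem ncard_ground_le_of_zmod_two [DecidableEq α] [M.Finite]
    (hφ : ∀ I ⊆ M.E, M.Indep I ↔ LinearIndepOn (ZMod 2) φ I)
    {g : ℕ} (hg : 5 ≤ g) (hgirth : ∀ C, M.IsCircuit C → g ≤ C.ncard)
    {C₀ : Finset α} (hC₀ : M.IsCircuit ↑C₀) (hC₀card : #C₀ = g) {f₀ : α} (hf₀ : f₀ ∈ C₀)
    {B : Finset α} (hB : M.IsBase ↑B) (hBC₀ : B ∩ C₀ = C₀.erase f₀) :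
    M.E.ncard ≤ #B + 1 + #((B \ C₀).powerset.filter fun T => 2 * #T + g ≤ 2 * #(B \ C₀) + 2) := by
  obtain ⟨E, hE⟩ : ∃ E : Finset α, ↑E = M.E := ⟨_, M.ground_finite.coe_toFinset⟩
  subst hC₀card
  have hsubE : ∀ {A : Finset α}, ↑A ⊆ M.E → A ⊆ E := fun hA => coe_subset.1 (hE ▸ hA)
  have hcount := card_sdiff_union_le_card_filter_powerset
    (fun A hAE => le_card_of_sum_eq_zero hφ hgirth (hE ▸ coe_subset.2 hAE))
    (hsubE hC₀.subset_ground) (sum_eq_zero_of_isCircuit hφ hC₀) le_rfl hg (hsubE hB.subset_ground)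
    (fun e he => exists_add_sum_eq_zero_of_isBase hφ hB (hE ▸ mem_coe.2 (mem_sdiff.1 he).1)
      (mem_sdiff.1 he).2)
  have hEcard := card_le_card_sdiff_add_card (s := E) (t := B ∪ C₀)
  have hunion := card_union_add_card_inter B C₀
  rw [hBC₀, card_erase_of_mem hf₀] at hunion
  rw [← hE, Set.ncard_coe_finset]
  have := card_pos.2 ⟨f₀, hf₀⟩
  omega

end Matroid

open Matroid

theorem size_bound_smallest_circuit_general {α : Type*} (k r w : ℕ) (M : Matroid α) [M.Finite]
    (hbinary : M.RepresentableOver (ZMod 2))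
    (hrank : M.rk = r) (hr : k + 4 ≤ r)
    (hw : w ≤ k)
    (hlower : ∀ C, M.Circuit C → r - w + 1 ≤ C.ncard)
    (hexists : ∃ C, M.Circuit C ∧ C.ncard = r - w + 1)
    (s : ℤ) (hs : s = Int.fdiv (3 * w + 1 - r) 2) :
    (M.E.ncard : ℤ) ≤ (r + 1) + ∑ i ∈ Finset.Icc (0 : ℤ) s, (w.choose i.toNat : ℤ) := by
  classical
  obtain ⟨n, φ, hφ⟩ := hbinary
  obtain ⟨C₀, hC₀, hC₀card⟩ := hexists
  rw [circuit_iff_isCircuit] at hC₀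
  lift C₀ to Finset α using M.ground_finite.subset hC₀.subset_ground
  rw [Set.ncard_coe_finset] at hC₀card
  obtain ⟨f₀, hf₀⟩ := card_pos.1 (by omega : 0 < #C₀)
  obtain ⟨B, hB, hBC₀⟩ := hC₀.exists_isBase_inter_eq_diff_singleton (mem_coe.2 hf₀)
  lift B to Finset α using M.ground_finite.subset hB.subset_ground
  rw [← coe_erase, ← coe_inter, coe_inj] at hBC₀
  have hBcard : #B = r := by rw [← hrank, rk_eq_ncard_of_isBase hB, Set.ncard_coe_finset]
  have hWcard : #(B \ C₀) = w := by
    have := card_sdiff_add_card_inter B C₀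
    rw [hBC₀, card_erase_of_mem hf₀] at this
    omega
  have hground := ncard_ground_le_of_zmod_two hφ (by omega)
    (fun C hC => hlower C (circuit_iff_isCircuit.2 hC)) hC₀ hC₀card hf₀ hB hBC₀
  rw [Int.fdiv_eq_ediv_of_nonneg _ (by norm_num)] at hs
  have hfamily := card_le_sum_choose_of_forall_card_le (s := s) (W := B \ C₀)
    (𝒜 := (B \ C₀).powerset.filter fun T => 2 * #T + (r - w + 1) ≤ 2 * #(B \ C₀) + 2)
    (fun T hT => ⟨mem_powerset.1 (mem_filter.1 hT).1, by have := (mem_filter.1 hT).2; omega⟩)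
  rw [← hWcard]
  omega

/-- Let `M` be a simple binary `k`-paving matroid of rank `r ≥ k + 4` that is not a
circuit, and suppose every circuit of `M` has size at least `r - w + 1` for some
`w ≤ k`, with equality achieved by some circuit. Then
`|E(M)| ≤ (r+1) + ∑_{i=0}^{s} C(w,i)`, where `s = ⌊(3w + 1 - r)/2⌋`. -/
theorem size_bound_smallest_circuit {α : Type*} (k r w : ℕ) (M : Matroid α) [M.Finite]
    (hsimple : M.Simple) (hbinary : M.RepresentableOver (ZMod 2))
    (hpaving : M.KPaving k) (hrank : M.rk = r) (hr : k + 4 ≤ r)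
    (hnotcirc : ¬ M.Circuit M.E) (hw : w ≤ k)
    (hlower : ∀ C, M.Circuit C → r - w + 1 ≤ C.ncard)
    (hexists : ∃ C, M.Circuit C ∧ C.ncard = r - w + 1)
    (s : ℤ) (hs : s = Int.fdiv (3 * w + 1 - r) 2) :
    (M.E.ncard : ℤ) ≤ (r + 1) + ∑ i ∈ Finset.Icc (0 : ℤ) s, (w.choose i.toNat : ℤ) :=
  size_bound_smallest_circuit_general k r w M hbinary hrank hr hw hlower hexists s hs
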